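/- The map P defined on entire functions by P(g)(z) = (g'(z))² is not hypercyclic on H(ℂ): there is no entire function g such that for every entire function f and every ε > 0, R > 0 there exists n ∈ ℕ with sup_{|z| ≤ R} |P^n(g)(z) − f(z)| < ε. -/

import Mathlib

/-- The polynomial map `P(g)(z) = (g'(z))²` on functions `ℂ → ℂ`. -/
noncomputable def P (g : ℂ → ℂ) : ℂ → ℂ := fun z => (deriv g z) ^ 2

/-!
For `n ≥ 1`, `Pⁿ(g) = (h')²` is the square of an entire function, and no square `w²` of an
entire function is uniformly `1/100`-close to `z ↦ c z` (`‖c‖ = 1`) on the closed unit disc: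
otherwise `‖w 0‖ < 1/10` and `‖w‖ ≤ 2` on the unit circle, so by the Cauchy estimate
`‖(w²)'(0)‖ = ‖2 w(0) w'(0)‖ < 1/2`, while `(w² - c z)'(0)` has norm at most `1/100` and differs
from `(w²)'(0)` by `c`. So a dense orbit could approximate both `z` and `-z` only at `n = 0`,
i.e. `g` itself would be close to both `1` and `-1` at `z = 1`.
-/

open Metric

theorem Differentiable.iterate_P {g : ℂ → ℂ} (hg : Differentiable ℂ g) (n : ℕ) :
    Differentiable ℂ (P^[n] g) := by
  induction n with
  | zero => exact hg
  | succ n ih =>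
    rw [Function.iterate_succ_apply']
    exact ih.deriv.pow 2

theorem not_forall_norm_sq_sub_mul_lt {w : ℂ → ℂ} (hw : Differentiable ℂ w) {c : ℂ}
    (hc : ‖c‖ = 1) : ¬ ∀ z : ℂ, ‖z‖ ≤ 1 → ‖w z ^ 2 - c * z‖ < 1 / 100 := by
  intro h
  set q : ℂ → ℂ := fun z => w z ^ 2 - c * z
  have hq_deriv : deriv q 0 = 2 * w 0 * deriv w 0 - c := by
    have : HasDerivAt q (2 * w 0 * deriv w 0 - c) 0 := by
      simpa using ((hw 0).hasDerivAt.fun_pow 2).fun_sub ((hasDerivAt_id' (0 : ℂ)).const_mul c)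
    exact this.deriv
  have hw0 : ‖w 0‖ < 1 / 10 := by
    have h0 := h 0 (by simp)
    rw [mul_zero, sub_zero, norm_pow] at h0
    nlinarith [norm_nonneg (w 0)]
  have hw_sphere : ∀ z ∈ sphere (0 : ℂ) 1, ‖w z‖ ≤ 2 := by
    intro z hz
    rw [mem_sphere_zero_iff_norm] at hz
    have hsq : ‖w z‖ ^ 2 < 4 := calc
      ‖w z‖ ^ 2 = ‖(w z ^ 2 - c * z) + c * z‖ := by rw [sub_add_cancel, norm_pow]
      _ ≤ ‖w z ^ 2 - c * z‖ + ‖c * z‖ := norm_add_le _ _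
      _ < 4 := by rw [norm_mul, hc, hz]; linarith [h z hz.le]
    nlinarith [norm_nonneg (w z)]
  have hdw : ‖deriv w 0‖ ≤ 2 := by
    simpa using Complex.norm_deriv_le_of_forall_mem_sphere_norm_le one_pos hw.diffContOnCl
      hw_sphere
  have hdq : ‖deriv q 0‖ ≤ 1 / 100 := by
    have hq_diff : Differentiable ℂ q := (hw.pow 2).sub (differentiable_id.const_mul c)
    simpa using Complex.norm_deriv_le_of_forall_mem_sphere_norm_le one_pos
      hq_diff.diffContOnCl fun z hz => (h z (mem_sphere_zero_iff_norm.mp hz).le).le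
  have : ‖c‖ < 1 := calc
    ‖c‖ = ‖2 * w 0 * deriv w 0 - deriv q 0‖ := by rw [hq_deriv, sub_sub_cancel]
    _ ≤ 2 * ‖w 0‖ * ‖deriv w 0‖ + ‖deriv q 0‖ := by
      rw [← Complex.norm_two, ← norm_mul, ← norm_mul]
      exact norm_sub_le _ _
    _ < 1 := by nlinarith [norm_nonneg (w 0), norm_nonneg (deriv w 0)]
  exact this.ne hc

/-- `P(g) = (g')²` is not hypercyclic on the space of entire functions. -/
theorem P_not_hypercyclic :
    ¬ ∃ g : ℂ → ℂ, Differentiable ℂ g ∧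
      ∀ f : ℂ → ℂ, Differentiable ℂ f → ∀ ε > (0 : ℝ), ∀ R > (0 : ℝ),
        ∃ n : ℕ, ∀ z : ℂ, ‖z‖ ≤ R →
          ‖(P^[n] g) z - f z‖ < ε := by
  rintro ⟨g, hg, H⟩
  have close_at_one : ∀ c : ℂ, ‖c‖ = 1 → ‖g 1 - c‖ < 1 / 100 := by
    intro c hc
    obtain ⟨n, hn⟩ := H (fun z => c * z) (by fun_prop) (1 / 100) (by norm_num) 1 one_pos
    cases n with
    | zero => simpa using hn 1 (by simp)
    | succ n =>
      rw [Function.iterate_succ_apply'] at hn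
      exact absurd hn (not_forall_norm_sq_sub_mul_lt (hg.iterate_P n).deriv hc)
  have h_pos := close_at_one 1 (by simp)
  have h_neg := close_at_one (-1) (by simp)
  have : (2 : ℝ) < 2 / 100 := calc
    (2 : ℝ) = ‖(g 1 - (-1)) - (g 1 - 1)‖ := by norm_num
    _ ≤ ‖g 1 - (-1)‖ + ‖g 1 - 1‖ := norm_sub_le _ _
    _ < 2 / 100 := by linarith
  norm_num at this
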